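/- arXiv:1601.05825 — 6 statements merged into one kernel-verified Lean document; each statement's English description precedes it below -/
import Mathlib

section
/- Every Banach space with the Schur property has property (K). -/
/-!
In a Schur space weakly compact sets are norm compact: a weakly compact set is weakly
sequentially compact (its trace on the closed span of a sequence is a compact set on which
countably many functionals separate points, hence metrizable), and the Schur property upgrades
weakly convergent subsequences to norm convergent ones. By Banach–Steinhaus a weak*-convergent
sequence in `X*` is equicontinuous, so it converges uniformly on norm compact sets. Hence the
sequence itself, a trivial convex block subsequence of itself, converges in `μ(X*, X)`.
-/

open NormedSpace Filter

/-- A set is weakly compact if it is compact in the weak topology. -/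
def IsWeaklyCompact {X : Type*} [NormedAddCommGroup X] [NormedSpace ℝ X] (L : Set X) : Prop :=
  IsCompact (toWeakSpace ℝ X '' L)

/-- Weak* convergence of a sequence of functionals. -/
def WStarTendsto {X : Type*} [NormedAddCommGroup X] [NormedSpace ℝ X]
    (f : ℕ → StrongDual ℝ X) (g : StrongDual ℝ X) : Prop :=
  ∀ x : X, Tendsto (fun n => f n x) atTop (nhds (g x))

/-- Convergence in the Mackey topology μ(X*,X): uniform convergence on every
weakly compact subset of X. -/
def MackeyTendsto {X : Type*} [NormedAddCommGroup X] [NormedSpace ℝ X]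
    (f : ℕ → StrongDual ℝ X) (g : StrongDual ℝ X) : Prop :=
  ∀ L : Set X, IsWeaklyCompact L → ∀ ε : ℝ, 0 < ε →
    ∀ᶠ n in atTop, ∀ x ∈ L, |f n x - g x| < ε

/-- `y` is a convex block subsequence of `x`. -/
def IsConvexBlock {E : Type*} [AddCommGroup E] [Module ℝ E] (x y : ℕ → E) : Prop :=
  ∃ (I : ℕ → Finset ℕ) (a : ℕ → ℝ),
    (∀ k, (I k).Nonempty) ∧
    (∀ k m m', m ∈ I k → m' ∈ I (k + 1) → m < m') ∧
    (∀ n, 0 ≤ a n) ∧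
    (∀ k, ∑ n ∈ I k, a n = 1) ∧
    (∀ k, y k = ∑ n ∈ I k, a n • x n)

/-- Property (K): every weak*-convergent sequence in the dual admits a convex block
subsequence converging in the Mackey topology. -/
def PropertyK (X : Type*) [NormedAddCommGroup X] [NormedSpace ℝ X] : Prop :=
  ∀ (f : ℕ → StrongDual ℝ X) (g : StrongDual ℝ X), WStarTendsto f g →
    ∃ (y : ℕ → StrongDual ℝ X) (h : StrongDual ℝ X), IsConvexBlock f y ∧ MackeyTendsto y h

/-- The Schur property: weakly convergent sequences are norm convergent. -/
def SchurProperty (X : Type*) [NormedAddCommGroup X] [NormedSpace ℝ X] : Prop :=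
  ∀ (x : ℕ → X) (x0 : X),
    (∀ f : StrongDual ℝ X, Tendsto (fun n => f (x n)) atTop (nhds (f x0))) →
    Tendsto x atTop (nhds x0)

open Topology Set TopologicalSpace

theorem exists_dual_seq_separating_of_isSeparable {𝕜 E : Type*} [RCLike 𝕜]
    [NormedAddCommGroup E] [NormedSpace 𝕜 E] {t : Set E} (ht : IsSeparable t) :
    ∃ g : ℕ → StrongDual 𝕜 E, ∀ a ∈ t, (∀ i, g i a = 0) → a = 0 := by
  obtain ⟨c, hc, htc⟩ := ht
  obtain ⟨d, hcd⟩ := countable_iff_exists_subset_range.mp hc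
  choose g hg_norm hg_eq using fun i => exists_dual_vector'' 𝕜 (d i)
  refine ⟨g, fun a hat ha => norm_le_zero_iff.mp ?_⟩
  have hdist : ∀ i, ‖a‖ ≤ 2 * ‖a - d i‖ := fun i => by
    have : ‖d i‖ ≤ ‖a - d i‖ := calc
      ‖d i‖ = ‖g i (d i - a)‖ := by simp [ha i, hg_eq i]
      _ ≤ 1 * ‖d i - a‖ := (g i).le_of_opNorm_le (hg_norm i) _
      _ = ‖a - d i‖ := by rw [one_mul, norm_sub_rev]
    linarith [norm_le_norm_add_norm_sub' a (d i)]
  have : closure (range d) ⊆ {y | ‖a‖ ≤ 2 * ‖a - y‖} :=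
    closure_minimal (range_subset_iff.mpr hdist) (isClosed_le (by fun_prop) (by fun_prop))
  simpa using this (closure_mono hcd (htc hat))

theorem IsCompact.metrizableSpace_of_subset_isSeparable {𝕜 E : Type*} [RCLike 𝕜]
    [NormedAddCommGroup E] [NormedSpace 𝕜 E] {K : Set (WeakSpace 𝕜 E)} (hK : IsCompact K)
    {t : Set E} (ht : IsSeparable t) (hKt : K ⊆ toWeakSpace 𝕜 E '' t) : MetrizableSpace K := by
  have : CompactSpace K := isCompact_iff_compactSpace.mp hK
  obtain ⟨g, hg⟩ := exists_dual_seq_separating_of_isSeparable (𝕜 := 𝕜)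
    ((ht.prod ht).image (f := fun p : E × E => p.1 - p.2) (by fun_prop))
  refine Metric.PiNatEmbed.TopologicalSpace.MetrizableSpace.of_countable_separating (X := K)
    (fun i w => g i ((toWeakSpace 𝕜 E).symm w))
    (fun i => (WeakBilin.eval_continuous _ (g i)).comp
      (continuous_subtype_val : Continuous ((↑) : K → WeakSpace 𝕜 E))) ?_
  rintro ⟨u, hu⟩ ⟨v, hv⟩ huv
  obtain ⟨u, hut, rfl⟩ := hKt hu
  obtain ⟨v, hvt, rfl⟩ := hKt hv
  by_contra! h
  have : u - v = 0 := hg _ ⟨(u, v), ⟨hut, hvt⟩, rfl⟩ fun i => by simpa [sub_eq_zero] using h i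
  exact huv (Subtype.ext (congrArg (toWeakSpace 𝕜 E) (sub_eq_zero.mp this)))

theorem IsWeaklyCompact.exists_subseq_forall_tendsto {X : Type*} [NormedAddCommGroup X]
    [NormedSpace ℝ X] {L : Set X} (hL : IsWeaklyCompact L) {x : ℕ → X} (hx : ∀ n, x n ∈ L) :
    ∃ x₀ ∈ L, ∃ φ : ℕ → ℕ, StrictMono φ ∧
      ∀ f : StrongDual ℝ X, Tendsto (fun j => f (x (φ j))) atTop (𝓝 (f x₀)) := by
  set e := toWeakSpace ℝ X
  set t := closure (Submodule.span ℝ (range x) : Set X)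
  have ht_sep : IsSeparable t := ((countable_range x).isSeparable.span).closure
  have ht_closed : IsClosed (e '' t) := by
    rw [(Submodule.span ℝ (range x)).convex.toWeakSpace_closure ℝ]
    exact isClosed_closure
  set K := e '' L ∩ e '' t
  have hK : IsCompact K := hL.inter_right ht_closed
  have : CompactSpace K := isCompact_iff_compactSpace.mp hK
  have : MetrizableSpace K := hK.metrizableSpace_of_subset_isSeparable ht_sep inter_subset_right
  have hxK (n : ℕ) : e (x n) ∈ K :=
    ⟨mem_image_of_mem _ (hx n),
      mem_image_of_mem _ (subset_closure (Submodule.subset_span ⟨n, rfl⟩))⟩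
  obtain ⟨⟨_, ⟨x₀, hx₀, rfl⟩, _⟩, φ, hφ, hlim⟩ :=
    CompactSpace.tendsto_subseq fun n => (⟨e (x n), hxK n⟩ : K)
  have hval : Continuous ((↑) : K → WeakSpace ℝ X) := continuous_subtype_val
  exact ⟨x₀, hx₀, φ, hφ, fun f =>
    ((WeakBilin.eval_continuous _ f).tendsto _).comp ((hval.tendsto _).comp hlim)⟩

theorem Equicontinuous.tendstoUniformlyOn_of_tendsto {ι X α : Type*} [TopologicalSpace X]
    [UniformSpace α] {F : ι → X → α} (hF : Equicontinuous F) {p : Filter ι} {f : X → α}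
    (hFf : ∀ x, Tendsto (fun i => F i x) p (𝓝 (f x))) {K : Set X} (hK : IsCompact K) :
    TendstoUniformlyOn F f p K := by
  have : CompactSpace K := isCompact_iff_compactSpace.mp hK
  have hFK : Equicontinuous (K.domRestrict ∘ F) :=
    (equicontinuous_restrict_iff F).mpr (hF.equicontinuousOn K)
  rw [tendstoUniformlyOn_iff_tendstoUniformly_comp_coe]
  exact UniformFun.tendsto_iff_tendstoUniformly.mp
    ((hFK.tendsto_uniformFun_iff_pi p _).mpr (tendsto_pi_nhds.mpr fun x => hFf x))

theorem ContinuousLinearMap.equicontinuous_of_tendsto {𝕜 E F : Type*} [NontriviallyNormedField 𝕜]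
    [SeminormedAddCommGroup E] [NormedSpace 𝕜 E] [CompleteSpace E] [SeminormedAddCommGroup F]
    [NormedSpace 𝕜 F] {f : ℕ → E →L[𝕜] F} {g : E → F}
    (hfg : ∀ x, Tendsto (fun n => f n x) atTop (𝓝 (g x))) :
    Equicontinuous (fun n => ⇑(f n)) :=
  ((norm_withSeminorms 𝕜 F).banach_steinhaus (𝓕 := f) fun _ x => by
    simpa using (hfg x).norm.bddAbove_range).equicontinuous

theorem SchurProperty.isCompact_of_isWeaklyCompact {X : Type*} [NormedAddCommGroup X]
    [NormedSpace ℝ X] (h : SchurProperty X) {L : Set X} (hL : IsWeaklyCompact L) :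
    IsCompact L :=
  IsSeqCompact.isCompact fun _ hx =>
    let ⟨x₀, hx₀, φ, hφ, hlim⟩ := hL.exists_subseq_forall_tendsto hx
    ⟨x₀, hx₀, φ, hφ, h _ x₀ hlim⟩

theorem SchurProperty.mackeyTendsto_of_wStarTendsto {X : Type*} [NormedAddCommGroup X]
    [NormedSpace ℝ X] [CompleteSpace X] (h : SchurProperty X) {f : ℕ → StrongDual ℝ X}
    {g : StrongDual ℝ X} (hfg : WStarTendsto f g) : MackeyTendsto f g := by
  intro L hL ε hε
  have hunif : TendstoUniformlyOn (fun n => ⇑(f n)) g atTop L :=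
    (ContinuousLinearMap.equicontinuous_of_tendsto hfg).tendstoUniformlyOn_of_tendsto hfg
      (h.isCompact_of_isWeaklyCompact hL)
  filter_upwards [Metric.tendstoUniformlyOn_iff.mp hunif ε hε] with n hn x hx
  simpa [Real.dist_eq, abs_sub_comm] using hn x hx

theorem IsConvexBlock.refl {E : Type*} [AddCommGroup E] [Module ℝ E] (x : ℕ → E) :
    IsConvexBlock x x :=
  ⟨fun k => {k}, fun _ => 1, fun k => Finset.singleton_nonempty k,
    fun k m m' hm hm' => by rw [Finset.mem_singleton] at hm hm'; omega,
    fun _ => zero_le_one, fun k => Finset.sum_singleton _ _, fun k => by simp⟩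

theorem schur_implies_propertyK (X : Type*) [NormedAddCommGroup X] [NormedSpace ℝ X]
    [CompleteSpace X] (h : SchurProperty X) : PropertyK X :=
  fun f g hfg => ⟨f, g, IsConvexBlock.refl f, h.mackeyTendsto_of_wStarTendsto hfg⟩
end

section
/- Every Grothendieck Banach space has property (K). In particular, every reflexive Banach space has property (K). -/
open NormedSpace Filter

/-- A Banach space is Grothendieck if every weak*-convergent sequence in the dual
is weakly convergent. -/
def GrothendieckSpace (X : Type*) [NormedAddCommGroup X] [NormedSpace ℝ X] : Prop :=
  ∀ (f : ℕ → StrongDual ℝ X) (g : StrongDual ℝ X), WStarTendsto f g →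
    ∀ F : StrongDual ℝ (StrongDual ℝ X), Tendsto (fun n => F (f n)) atTop (nhds (F g))

/-! In a Grothendieck space a weak*-convergent sequence `f n → g` in `X*` converges weakly, so by
Mazur's lemma `g` lies in the norm closure of the convex hull of every tail `{f n | n ≥ N}`.
Choosing, block after block, a convex combination of a tail starting past the previous block
within `1 / (k + 1)` of `g` gives a convex block sequence converging to `g` in norm; norm
convergence is Mackey convergence because weakly compact sets are bounded. In a reflexive space
every functional on `X*` is evaluation at a point, so weak* and weak convergence in `X*` agree. -/

open Topology

section ConvexBlock

variable {E : Type*} [AddCommGroup E] [Module ℝ E]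

theorem exists_sum_eq_of_mem_convexHull_image {ι : Type*} {x : ι → E} {s : Set ι} {z : E}
    (hz : z ∈ convexHull ℝ (x '' s)) :
    ∃ (J : Finset ι) (b : ι → ℝ), ↑J ⊆ s ∧ (∀ i ∈ J, 0 ≤ b i) ∧ ∑ i ∈ J, b i = 1 ∧
      ∑ i ∈ J, b i • x i = z := by
  classical
  rw [Set.image_eq_range, convexHull_range_eq_exists_affineCombination] at hz
  obtain ⟨J, w, hw0, hw1, rfl⟩ := hz
  refine ⟨J.map (Function.Embedding.subtype (· ∈ s)), fun i => if h : i ∈ s then w ⟨i, h⟩ else 0,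
    ?_, ?_, ?_, ?_⟩ <;>
    simp_all [Finset.affineCombination_eq_linear_combination _ _ _ hw1]

variable {x : ℕ → E}

/-- Blocks in consecutive intervals `[N k, N (k + 1))` never overlap, so block-dependent weights
glue to a single weight sequence. -/
theorem isConvexBlock_of_subset_Ico {I : ℕ → Finset ℕ} {N : ℕ → ℕ} {b : ℕ → ℕ → ℝ}
    (hne : ∀ k, (I k).Nonempty) (hI : ∀ k, ↑(I k) ⊆ Set.Ico (N k) (N (k + 1)))
    (hb0 : ∀ k, ∀ n ∈ I k, 0 ≤ b k n) (hb1 : ∀ k, ∑ n ∈ I k, b k n = 1) :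
    IsConvexBlock x fun k => ∑ n ∈ I k, b k n • x n := by
  have hN : Monotone N := monotone_nat_of_le_succ fun k =>
    let ⟨n, hn⟩ := hne k
    ((hI k hn).1.trans (hI k hn).2.le)
  have hlt : ∀ {k j m m'}, k < j → m ∈ I k → m' ∈ I j → m < m' := fun hkj hm hm' =>
    (hI _ hm).2.trans_le ((hN hkj).trans (hI _ hm').1)
  have hunique : ∀ {k j n}, n ∈ I k → n ∈ I j → k = j := fun {k j n} hk hj => by
    by_contra hkj
    rcases Nat.lt_or_gt_of_ne hkj with h | h
    exacts [(hlt h hk hj).false, (hlt h hj hk).false]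
  classical
  let a : ℕ → ℝ := fun n => if h : ∃ k, n ∈ I k then b h.choose n else 0
  have ha : ∀ k, ∀ n ∈ I k, a n = b k n := fun k n hn => by
    have h : ∃ k, n ∈ I k := ⟨k, hn⟩
    simp only [a, dif_pos h, hunique h.choose_spec hn]
  refine ⟨I, a, hne, fun k m m' => hlt k.lt_succ_self, fun n => ?_, fun k => ?_, fun k => ?_⟩
  · by_cases h : ∃ k, n ∈ I k
    · simpa only [a, dif_pos h] using hb0 _ _ h.choose_spec
    · simp only [a, dif_neg h, le_refl]
  · rw [Finset.sum_congr rfl (ha k), hb1 k]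
  · exact Finset.sum_congr rfl fun n hn => by rw [ha k n hn]

theorem exists_isConvexBlock_of_forall_mem_convexHull {P : ℕ → E → Prop}
    (h : ∀ k N, ∃ z ∈ convexHull ℝ (x '' Set.Ici N), P k z) :
    ∃ y, IsConvexBlock x y ∧ ∀ k, P k (y k) := by
  have h' : ∀ k N, ∃ (J : Finset ℕ) (b : ℕ → ℝ), (J : Set ℕ) ⊆ Set.Ici N ∧ (∀ n ∈ J, 0 ≤ b n) ∧
      ∑ n ∈ J, b n = 1 ∧ P k (∑ n ∈ J, b n • x n) := fun k N => by
    obtain ⟨z, hz, hPz⟩ := h k N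
    obtain ⟨J, b, hJ, hb0, hb1, rfl⟩ := exists_sum_eq_of_mem_convexHull_image hz
    exact ⟨J, b, hJ, hb0, hb1, hPz⟩
  choose J b hJ hb0 hb1 hP using h'
  -- the `k`-th block starts right after the last index used by the previous one
  let N : ℕ → ℕ := fun k => Nat.rec 0 (fun k Nk => (J k Nk).sup id + 1) k
  refine ⟨_, isConvexBlock_of_subset_Ico (I := fun k => J k (N k)) (N := N)
    (fun k => Finset.nonempty_of_sum_ne_zero (by rw [hb1]; exact one_ne_zero))
    (fun k n hn => ⟨hJ k (N k) hn, Nat.lt_succ_of_le (Finset.le_sup (f := id) hn)⟩)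
    (fun k => hb0 k (N k)) (fun k => hb1 k (N k)), fun k => hP k (N k)⟩

end ConvexBlock

theorem mem_closure_convexHull_of_weak_tendsto {α E : Type*} [AddCommGroup E] [Module ℝ E]
    [TopologicalSpace E] [IsTopologicalAddGroup E] [ContinuousSMul ℝ E] [LocallyConvexSpace ℝ E]
    {l : Filter α} [l.NeBot] {f : α → E} {g : E} {s : Set E}
    (hf : ∀ φ : StrongDual ℝ E, Tendsto (fun a => φ (f a)) l (𝓝 (φ g)))
    (hs : ∀ᶠ a in l, f a ∈ s) : g ∈ closure (convexHull ℝ s) := by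
  by_contra hg
  obtain ⟨φ, u, hφ, hu⟩ :=
    geometric_hahn_banach_closed_point (convex_convexHull ℝ s).closure isClosed_closure hg
  have : φ g ≤ u := le_of_tendsto (hf φ) <|
    hs.mono fun a ha => (hφ _ (subset_closure (subset_convexHull ℝ s ha))).le
  exact this.not_gt hu

theorem exists_isConvexBlock_tendsto_of_weak_tendsto {E : Type*} [NormedAddCommGroup E]
    [NormedSpace ℝ E] {f : ℕ → E} {g : E}
    (hf : ∀ φ : StrongDual ℝ E, Tendsto (fun n => φ (f n)) atTop (𝓝 (φ g))) :
    ∃ y, IsConvexBlock f y ∧ Tendsto y atTop (𝓝 g) := by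
  obtain ⟨y, hy, hdist⟩ := exists_isConvexBlock_of_forall_mem_convexHull (x := f)
    (P := fun k z => dist g z < 1 / (k + 1)) fun k N =>
      Metric.mem_closure_iff.mp (mem_closure_convexHull_of_weak_tendsto (s := f '' Set.Ici N) hf
        ((eventually_ge_atTop N).mono fun n hn => ⟨n, hn, rfl⟩)) _ Nat.one_div_pos_of_nat
  refine ⟨y, hy, tendsto_iff_dist_tendsto_zero.mpr ?_⟩
  exact squeeze_zero (fun _ => dist_nonneg) (fun k => (dist_comm _ _).trans_le (hdist k).le)
    tendsto_one_div_add_atTop_nhds_zero_nat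

section PropertyK

variable {X : Type*} [NormedAddCommGroup X] [NormedSpace ℝ X]

theorem IsWeaklyCompact.isBounded {L : Set X} (hL : IsWeaklyCompact L) : Bornology.IsBounded L := by
  have hpt : ∀ φ : StrongDual ℝ X, ∃ C, ∀ x : L, ‖inclusionInDoubleDual ℝ X x φ‖ ≤ C := fun φ => by
    obtain ⟨C, hC⟩ := isBounded_iff_forall_norm_le.mp
      (hL.image (WeakBilin.eval_continuous (topDualPairing ℝ X).flip φ)).isBounded
    exact ⟨C, fun x => hC _ ⟨_, ⟨x, x.2, rfl⟩, rfl⟩⟩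
  obtain ⟨C, hC⟩ := banach_steinhaus hpt
  refine isBounded_iff_forall_norm_le.mpr ⟨C, fun x hx => ?_⟩
  exact ((inclusionInDoubleDualLi ℝ).norm_map x).symm.trans_le (hC ⟨x, hx⟩)

theorem mackeyTendsto_of_tendsto {y : ℕ → StrongDual ℝ X} {h : StrongDual ℝ X}
    (hy : Tendsto y atTop (𝓝 h)) : MackeyTendsto y h := by
  intro L hL ε hε
  obtain ⟨C, hC0, hC⟩ := hL.isBounded.exists_pos_norm_le
  filter_upwards [(tendsto_iff_norm_sub_tendsto_zero.mp hy).eventually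
    (gt_mem_nhds (div_pos hε hC0))] with n hn x hx
  calc |y n x - h x| = ‖(y n - h) x‖ := rfl
    _ ≤ ‖y n - h‖ * ‖x‖ := (y n - h).le_opNorm x
    _ ≤ ‖y n - h‖ * C := by gcongr; exact hC x hx
    _ < ε / C * C := by gcongr
    _ = ε := div_mul_cancel₀ ε hC0.ne'

theorem GrothendieckSpace.propertyK (hX : GrothendieckSpace X) : PropertyK X := fun f g hfg =>
  let ⟨y, hy, hyg⟩ := exists_isConvexBlock_tendsto_of_weak_tendsto (hX f g hfg)
  ⟨y, g, hy, mackeyTendsto_of_tendsto hyg⟩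

theorem grothendieckSpace_of_surjective_inclusionInDoubleDual
    (hX : Function.Surjective (inclusionInDoubleDual ℝ X)) : GrothendieckSpace X := by
  intro f g hfg F
  obtain ⟨x, rfl⟩ := hX F
  exact hfg x

end PropertyK

theorem grothendieck_implies_propertyK_general (X : Type*) [NormedAddCommGroup X]
    [NormedSpace ℝ X] :
    (GrothendieckSpace X → PropertyK X) ∧
    (Function.Surjective (NormedSpace.inclusionInDoubleDual ℝ X) → PropertyK X) :=
  ⟨GrothendieckSpace.propertyK,
    fun hX => (grothendieckSpace_of_surjective_inclusionInDoubleDual hX).propertyK⟩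

theorem grothendieck_implies_propertyK (X : Type*) [NormedAddCommGroup X]
    [NormedSpace ℝ X] [CompleteSpace X] :
    (GrothendieckSpace X → PropertyK X) ∧
    (Function.Surjective (NormedSpace.inclusionInDoubleDual ℝ X) → PropertyK X) :=
  grothendieck_implies_propertyK_general X
end

section
/- The Banach space c₀ fails property (K). Specifically, the canonical unit vector basis (e_n*) of ℓ¹ = c₀* is weak*-null but admits no convex block subsequence converging to 0 in the Mackey topology μ(ℓ¹, c₀). -/
open NormedSpace Filter

/-- c₀, the space of real sequences vanishing at infinity, with the sup norm. -/
noncomputable abbrev czero := ZeroAtInftyContinuousMap ℕ ℝ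

/-!
Writing `eₙ*` for the coordinate functionals, `eₙ*(x) = xₙ → 0` for every `x ∈ c₀`, so `(eₙ*)` is
weak*-null. Let `y_k = ∑_{n ∈ I_k} aₙ eₙ*` be a convex block subsequence and let `1_{I_k} ∈ c₀` be
the indicator of its support. The signed sums `∑_{k ∈ T} ±1_{I_k}` have norm at most `1`, so
`∑_k |f(1_{I_k})| ≤ ‖f‖` for every `f ∈ c₀*`; hence `1_{I_k} → 0` weakly, and `{0} ∪ {1_{I_k}}` is
weakly compact. Since `y_k(1_{I_k}) = 1`, the sequence `(y_k)` does not converge to `0` uniformly on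
this set. Finally, a Mackey limit is a weak* limit, and convex blocks of a weak*-null sequence are
weak*-null, so the only possible Mackey limit of `(y_k)` is `0`: property (K) fails.
-/

open Topology Finset Function

section Successive

variable {I : ℕ → Finset ℕ}

lemma strictMono_min'_of_successive (hne : ∀ k, (I k).Nonempty)
    (hsucc : ∀ k m m', m ∈ I k → m' ∈ I (k + 1) → m < m') :
    StrictMono fun k => (I k).min' (hne k) :=
  strictMono_nat_of_lt_succ fun k => hsucc k _ _ (min'_mem _ _) (min'_mem _ _)

lemma le_of_mem_successive (hne : ∀ k, (I k).Nonempty)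
    (hsucc : ∀ k m m', m ∈ I k → m' ∈ I (k + 1) → m < m') {k m : ℕ} (hm : m ∈ I k) : k ≤ m :=
  ((strictMono_min'_of_successive hne hsucc).id_le k).trans (min'_le _ _ hm)

lemma pairwise_disjoint_of_successive (hne : ∀ k, (I k).Nonempty)
    (hsucc : ∀ k m m', m ∈ I k → m' ∈ I (k + 1) → m < m') : Pairwise (Disjoint on I) := by
  refine (pairwise_disjoint_on I).2 fun k l hkl => disjoint_left.2 fun m hmk hml => ?_
  have hmono := (strictMono_min'_of_successive hne hsucc).monotone
  exact (hsucc k m _ hmk (min'_mem _ _)).not_ge ((hmono hkl).trans (min'_le _ _ hml))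

end Successive

section Functionals

variable {X : Type*} [NormedAddCommGroup X] [NormedSpace ℝ X]

lemma WStarTendsto.unique {f : ℕ → StrongDual ℝ X} {g₁ g₂ : StrongDual ℝ X}
    (h₁ : WStarTendsto f g₁) (h₂ : WStarTendsto f g₂) : g₁ = g₂ :=
  ContinuousLinearMap.ext fun x => tendsto_nhds_unique (h₁ x) (h₂ x)

lemma MackeyTendsto.wStarTendsto {f : ℕ → StrongDual ℝ X} {g : StrongDual ℝ X}
    (h : MackeyTendsto f g) : WStarTendsto f g := by
  intro x
  have hx : IsWeaklyCompact ({x} : Set X) := by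
    simp only [IsWeaklyCompact, Set.image_singleton, isCompact_singleton]
  exact Metric.tendsto_nhds.2 fun ε hε => (h {x} hx ε hε).mono fun n hn => hn x rfl

lemma IsConvexBlock.wStarTendsto {f y : ℕ → StrongDual ℝ X} {g : StrongDual ℝ X}
    (hy : IsConvexBlock f y) (hf : WStarTendsto f g) : WStarTendsto y g := by
  obtain ⟨I, a, hne, hsucc, ha, hsum, hyI⟩ := hy
  intro x
  refine Metric.tendsto_atTop.2 fun ε hε => ?_
  obtain ⟨N, hN⟩ := Metric.tendsto_atTop.1 (hf x) ε hε
  refine ⟨N, fun k hk => ?_⟩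
  rw [hyI k, _root_.sum_apply]
  exact (convex_ball (g x) ε).sum_mem (fun n _ => ha n) (hsum k) fun n hn =>
    hN n (hk.trans (le_of_mem_successive hne hsucc hn))

lemma isWeaklyCompact_insert_range_of_tendsto {x : ℕ → X} {x₀ : X}
    (h : ∀ f : StrongDual ℝ X, Tendsto (fun k => f (x k)) atTop (𝓝 (f x₀))) :
    IsWeaklyCompact (insert x₀ (Set.range x)) := by
  rw [IsWeaklyCompact, Set.image_insert_eq, ← Set.range_comp]
  exact Tendsto.isCompact_insert_range <|
    (WeakBilin.tendsto_iff_forall_eval_tendsto _ (separatingDual_iff_injective.1 inferInstance)).2 h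

end Functionals

noncomputable def czeroIndicator (J : Finset ℕ) : czero where
  toFun n := if n ∈ J then 1 else 0
  continuous_toFun := continuous_of_discreteTopology
  zero_at_infty' := by
    rw [cocompact_eq_cofinite]
    exact tendsto_nhds_of_eventually_eq <| J.eventually_cofinite_notMem.mono fun n hn => if_neg hn

lemma czeroIndicator_apply (J : Finset ℕ) (n : ℕ) :
    czeroIndicator J n = if n ∈ J then 1 else 0 := rfl

lemma czero_sum_apply {ι : Type*} (T : Finset ι) (x : ι → czero) (n : ℕ) :
    (∑ k ∈ T, x k) n = ∑ k ∈ T, x k n := by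
  induction T using Finset.cons_induction <;> simp [*]

section DisjointIndicators

variable {J : ℕ → Finset ℕ}

lemma norm_sum_smul_czeroIndicator_le_one (hJ : Pairwise (Disjoint on J)) (T : Finset ℕ)
    {c : ℕ → ℝ} (hc : ∀ k, |c k| ≤ 1) : ‖∑ k ∈ T, c k • czeroIndicator (J k)‖ ≤ 1 := by
  rw [← ZeroAtInftyContinuousMap.norm_toBCF_eq_norm, BoundedContinuousFunction.norm_le zero_le_one]
  intro n
  have hcard : #{k ∈ T | n ∈ J k} ≤ 1 := card_le_one.2 fun k hk l hl =>
    hJ.eq (not_disjoint_iff.2 ⟨n, (mem_filter.1 hk).2, (mem_filter.1 hl).2⟩)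
  calc ‖(∑ k ∈ T, c k • czeroIndicator (J k)).toBCF n‖
      = |∑ k ∈ T, c k * if n ∈ J k then 1 else 0| := by
        simp [czero_sum_apply, czeroIndicator_apply]
    _ ≤ ∑ k ∈ T, if n ∈ J k then 1 else 0 :=
        (abs_sum_le_sum_abs _ _).trans <| sum_le_sum fun k _ => by split_ifs <;> simp [hc k]
    _ ≤ 1 := by rw [sum_boole]; exact_mod_cast hcard

lemma sum_abs_apply_czeroIndicator_le (hJ : Pairwise (Disjoint on J)) (f : StrongDual ℝ czero)
    (T : Finset ℕ) : ∑ k ∈ T, |f (czeroIndicator (J k))| ≤ ‖f‖ := by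
  set s := ∑ k ∈ T, (SignType.sign (f (czeroIndicator (J k))) : ℝ) • czeroIndicator (J k)
  have hsign (r : ℝ) : |(SignType.sign r : ℝ)| ≤ 1 := by
    rcases SignType.sign r with _ | _ | _ <;> simp
  have hs : ‖s‖ ≤ 1 := norm_sum_smul_czeroIndicator_le_one hJ T fun _ => hsign _
  calc ∑ k ∈ T, |f (czeroIndicator (J k))| = f s := by simp [s, map_sum, sign_mul_self]
    _ ≤ ‖f‖ * ‖s‖ := (le_abs_self _).trans (f.le_opNorm s)
    _ ≤ ‖f‖ := mul_le_of_le_one_right (norm_nonneg f) hs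

lemma tendsto_apply_czeroIndicator (hJ : Pairwise (Disjoint on J)) (f : StrongDual ℝ czero) :
    Tendsto (fun k => f (czeroIndicator (J k))) atTop (𝓝 0) :=
  (summable_of_sum_le (fun _ => abs_nonneg _)
    (sum_abs_apply_czeroIndicator_le hJ f)).of_abs.tendsto_atTop_zero

lemma isWeaklyCompact_insert_zero_range_czeroIndicator (hJ : Pairwise (Disjoint on J)) :
    IsWeaklyCompact (insert 0 (Set.range fun k => czeroIndicator (J k))) :=
  isWeaklyCompact_insert_range_of_tendsto fun f => by
    simpa only [map_zero] using tendsto_apply_czeroIndicator hJ f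

end DisjointIndicators

section Coordinates

variable {e : ℕ → StrongDual ℝ czero} (he : ∀ (n : ℕ) (x : czero), e n x = x n)
include he

lemma wStarTendsto_zero_of_coordinates : WStarTendsto e 0 := fun x => by
  simpa [he, cocompact_eq_atTop] using x.zero_at_infty'

lemma IsConvexBlock.not_mackeyTendsto_zero_of_coordinates {y : ℕ → StrongDual ℝ czero}
    (hy : IsConvexBlock e y) : ¬ MackeyTendsto y 0 := by
  obtain ⟨I, a, hne, hsucc, -, hsum, hyI⟩ := hy
  intro hM
  have hL := isWeaklyCompact_insert_zero_range_czeroIndicator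
    (pairwise_disjoint_of_successive hne hsucc)
  obtain ⟨k, hk⟩ := (hM _ hL 1 one_pos).exists
  have hyk : y k (czeroIndicator (I k)) = 1 := by
    rw [hyI k, _root_.sum_apply, ← hsum k]
    exact sum_congr rfl fun n hn => by simp [he, czeroIndicator_apply, hn]
  simpa [hyk] using hk _ (Set.mem_insert_of_mem _ ⟨k, rfl⟩)

end Coordinates

theorem czero_fails_propertyK (e : ℕ → StrongDual ℝ czero)
    (he : ∀ (n : ℕ) (x : czero), e n x = x n) :
    ¬ PropertyK czero ∧ WStarTendsto e 0 ∧
      ¬ ∃ y : ℕ → StrongDual ℝ czero, IsConvexBlock e y ∧ MackeyTendsto y 0 := by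
  have hnull : WStarTendsto e 0 := wStarTendsto_zero_of_coordinates he
  have hblock : ¬ ∃ y, IsConvexBlock e y ∧ MackeyTendsto y 0 := fun ⟨y, hy, hM⟩ =>
    hy.not_mackeyTendsto_zero_of_coordinates he hM
  refine ⟨fun hK => ?_, hnull, hblock⟩
  obtain ⟨y, g, hy, hM⟩ := hK e 0 hnull
  have hg : g = 0 := hM.wStarTendsto.unique (hy.wStarTendsto hnull)
  exact hblock ⟨y, hy, hg ▸ hM⟩
end

section
/- Let X be a Banach space with property (K) and Y ⊆ X a weak*-extensible subspace. Then Y has property (K). -/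
open NormedSpace Filter

/-- A closed subspace Y of X is weak*-extensible if every weak*-null sequence in Y*
admits a subsequence which extends to a weak*-null sequence in X*. -/
def WStarExtensible (X : Type*) [NormedAddCommGroup X] [NormedSpace ℝ X]
    (Y : Submodule ℝ X) : Prop :=
  ∀ g : ℕ → StrongDual ℝ ↥Y, WStarTendsto g 0 →
    ∃ φ : ℕ → ℕ, StrictMono φ ∧ ∃ f : ℕ → StrongDual ℝ X, WStarTendsto f 0 ∧
      ∀ n, (f n).comp Y.subtypeL = g (φ n)

/-!
Given `f n → g` weak* in `Y*`, the sequence `f n - g` is weak*-null, so a subsequence of it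
extends to a weak*-null sequence in `X*`. Property (K) of `X` gives convex blocks of the
extension converging in the Mackey topology; restricting them to `Y` and adding `g` back yields
convex blocks of `f`. Mackey convergence survives the restriction because the inclusion
`Y → X` is weak-to-weak continuous, hence maps weakly compact sets to weakly compact sets.
-/

namespace IsConvexBlock

variable {E F : Type*} [AddCommGroup E] [Module ℝ E] [AddCommGroup F] [Module ℝ F]
  {x y : ℕ → E}

theorem map (T : E →ₗ[ℝ] F) (hxy : IsConvexBlock x y) : IsConvexBlock (T ∘ x) (T ∘ y) := by
  obtain ⟨I, a, hne, hord, ha0, hsum, hy⟩ := hxy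
  exact ⟨I, a, hne, hord, ha0, hsum, fun k => by simp [hy k, map_sum]⟩

theorem add_const (c : E) (hxy : IsConvexBlock x y) :
    IsConvexBlock (fun n => x n + c) (fun k => y k + c) := by
  obtain ⟨I, a, hne, hord, ha0, hsum, hy⟩ := hxy
  refine ⟨I, a, hne, hord, ha0, hsum, fun k => ?_⟩
  simp only [smul_add, Finset.sum_add_distrib, ← Finset.sum_smul, hsum k, one_smul, hy k]

/-- A convex block subsequence of a subsequence `x ∘ φ` is one of `x`: transport the blocks
along `φ` and the weights along a left inverse of `φ`. -/
theorem of_comp_strictMono {φ : ℕ → ℕ} (hφ : StrictMono φ) (hxy : IsConvexBlock (x ∘ φ) y) :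
    IsConvexBlock x y := by
  obtain ⟨I, a, hne, hord, ha0, hsum, hy⟩ := hxy
  have hinv : ∀ n, Function.invFun φ (φ n) = n := Function.leftInverse_invFun hφ.injective
  have hinjOn : ∀ k, Set.InjOn φ (I k) := fun _ => hφ.injective.injOn
  refine ⟨fun k => (I k).image φ, a ∘ Function.invFun φ, fun k => (hne k).image φ,
    ?_, fun n => ha0 _, fun k => ?_, fun k => ?_⟩
  · simp only [Finset.mem_image]
    rintro k _ _ ⟨n, hn, rfl⟩ ⟨n', hn', rfl⟩
    exact hφ (hord k n n' hn hn')
  · simpa [Finset.sum_image (hinjOn k), hinv] using hsum k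
  · simpa [Finset.sum_image (hinjOn k), hinv] using hy k

end IsConvexBlock

section Duality

variable {X Z : Type*} [NormedAddCommGroup X] [NormedSpace ℝ X]
  [NormedAddCommGroup Z] [NormedSpace ℝ Z]

theorem IsWeaklyCompact.image {L : Set Z} (hL : IsWeaklyCompact L) (T : Z →L[ℝ] X) :
    IsWeaklyCompact (T '' L) := by
  have hcont : Continuous (WeakSpace.map T) := (WeakSpace.map T).continuous
  unfold IsWeaklyCompact at hL ⊢
  rw [Set.image_image]
  convert hL.image hcont using 1
  rw [Set.image_image]
  rfl

theorem WStarTendsto.sub_const {f : ℕ → StrongDual ℝ X} {g : StrongDual ℝ X}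
    (hfg : WStarTendsto f g) : WStarTendsto (fun n => f n - g) 0 := fun x => by
  simpa using (hfg x).sub_const (g x)

theorem MackeyTendsto.add_const {f : ℕ → StrongDual ℝ X} {g : StrongDual ℝ X}
    (hfg : MackeyTendsto f g) (c : StrongDual ℝ X) :
    MackeyTendsto (fun n => f n + c) (g + c) := by
  intro L hL ε hε
  filter_upwards [hfg L hL ε hε] with n hn x hx
  simpa using hn x hx

theorem MackeyTendsto.comp {f : ℕ → StrongDual ℝ X} {g : StrongDual ℝ X}
    (hfg : MackeyTendsto f g) (T : Z →L[ℝ] X) :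
    MackeyTendsto (fun n => (f n).comp T) (g.comp T) := by
  intro L hL ε hε
  filter_upwards [hfg _ (hL.image T) ε hε] with n hn z hz
  exact hn (T z) ⟨z, hz, rfl⟩

end Duality

theorem propertyK_of_wstarExtensible_general (X : Type*) [NormedAddCommGroup X]
    [NormedSpace ℝ X] (Y : Submodule ℝ X)
    (hext : WStarExtensible X Y)
    (hX : PropertyK X) : PropertyK ↥Y := by
  intro f g hfg
  obtain ⟨φ, hφ, F, hF0, hFres⟩ := hext _ hfg.sub_const
  obtain ⟨B, h, hB, hBh⟩ := hX F 0 hF0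
  refine ⟨fun k => (B k).comp Y.subtypeL + g, h.comp Y.subtypeL + g, ?_,
    (hBh.comp Y.subtypeL).add_const g⟩
  have hBres : IsConvexBlock (fun n => f (φ n) - g) (fun k => (B k).comp Y.subtypeL) := by
    simpa [Function.comp_def, hFres] using
      hB.map (ContinuousLinearMap.precomp ℝ Y.subtypeL :
        StrongDual ℝ X →L[ℝ] StrongDual ℝ Y).toLinearMap
  refine IsConvexBlock.of_comp_strictMono hφ ?_
  simpa [Function.comp_def] using hBres.add_const g

theorem propertyK_of_wstarExtensible (X : Type*) [NormedAddCommGroup X]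
    [NormedSpace ℝ X] [CompleteSpace X] (Y : Submodule ℝ X)
    (hYc : IsClosed (Y : Set X)) (hext : WStarExtensible X Y)
    (hX : PropertyK X) : PropertyK ↥Y :=
  propertyK_of_wstarExtensible_general X Y hext hX
end

section
/- Let κ < 𝔭 be a cardinal, let 𝒮 be a set of linearly independent sequences in a real vector space, and for each α < κ let 𝒮_α ⊆ 𝒮 satisfy: (i) if (g_n) ∈ 𝒮_α and (h_n) is eventually a rational convex block subsequence of (g_n), then (h_n) ∈ 𝒮_α; (ii) every sequence in 𝒮 admits a rational convex block subsequence in 𝒮_α. Then every sequence of 𝒮 admits a rational convex block subsequence belonging to ⋂_{α<κ} 𝒮_α. -/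
open NormedSpace Filter

/-- The pseudo-intersection number 𝔭. -/
noncomputable def pseudoIntersectionNumber : Cardinal :=
  sInf { c : Cardinal | ∃ M : Set (Set ℕ),
    (∀ A ∈ M, A.Infinite) ∧
    (∀ F : Finset (Set ℕ), ↑F ⊆ M → Set.Infinite (⋂ A ∈ F, A)) ∧
    (¬ ∃ A : Set ℕ, A.Infinite ∧ ∀ B ∈ M, (A \ B).Finite) ∧
    Cardinal.mk M = c }

/-- `y` is a rational convex block subsequence of `x`. -/
def IsRatConvexBlock {E : Type*} [AddCommGroup E] [Module ℝ E] (x y : ℕ → E) : Prop :=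
  ∃ (I : ℕ → Finset ℕ) (a : ℕ → ℝ),
    (∀ k, (I k).Nonempty) ∧
    (∀ k m mm, m ∈ I k → mm ∈ I (k + 1) → m < mm) ∧
    (∀ n, 0 ≤ a n) ∧
    (∀ n, ∃ q : ℚ, a n = (q : ℝ)) ∧
    (∀ k, ∑ n ∈ I k, a n = 1) ∧
    (∀ k, y k = ∑ n ∈ I k, a n • x n)

/-- `y ⪯ x`: `y` is eventually a rational convex block subsequence of `x`. -/
def EvRatConvexBlock {E : Type*} [AddCommGroup E] [Module ℝ E] (x y : ℕ → E) : Prop :=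
  ∃ n₀ : ℕ, IsRatConvexBlock x (fun k => y (k + n₀))

/-!
A rational convex block sequence of a linearly independent `f` is recorded by its finitely
supported rational weight vectors, and linear independence makes this faithful: for blocks `g`, `h`
of `f`, `h ⪯ g` means that eventually every weight vector of `h` is a convex combination of those
of `g`. Weight vectors form a countable set, so for fewer than `𝔭` blocks `g_i` of `f`, any finitely
many of which have a common `⪯`-lower bound, the sets of convex combinations of the weights of the
`g_i`, together with the sets of weights supported beyond each `m`, have an infinite
pseudo-intersection; successive elements of it form a common lower bound `h` (the Haydon–Levy–Odell
lemma). The theorem follows by transfinite recursion along a well-order of the index set: at stage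
`β` take a common lower bound of the earlier stages and pass to a block of it in `S_β`.
-/

open Finsupp

section
variable {E : Type*} [AddCommGroup E] [Module ℝ E]

noncomputable def ratComb (x : ℕ → E) (c : ℕ →₀ ℚ) : E :=
  linearCombination ℝ x (c.mapRange (↑) Rat.cast_zero)

theorem ratComb_apply (x : ℕ → E) (c : ℕ →₀ ℚ) : ratComb x c = c.sum fun n q => (q : ℝ) • x n := by
  rw [ratComb, linearCombination_apply, sum_mapRange_index (by simp)]

theorem ratComb_eq_sum_of_subset (x : ℕ → E) {c : ℕ →₀ ℚ} {s : Finset ℕ} (hs : c.support ⊆ s) :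
    ratComb x c = ∑ n ∈ s, (c n : ℝ) • x n := by
  rw [ratComb_apply]
  exact sum_of_support_subset c hs _ fun _ _ => by simp

theorem ratComb_linearCombination (x : ℕ → E) (c : ℕ → ℕ →₀ ℚ) (w : ℕ →₀ ℚ) :
    ratComb x (linearCombination ℚ c w) = ratComb (fun j => ratComb x (c j)) w := by
  induction w using induction_linear with
  | zero => simp [ratComb]
  | add w₁ w₂ h₁ h₂ =>
    simp only [ratComb, map_add] at *
    rw [mapRange_add (fun _ _ => Rat.cast_add _ _), mapRange_add (fun _ _ => Rat.cast_add _ _),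
      map_add, map_add, h₁, h₂]
  | single j q =>
    simp only [ratComb, linearCombination_single]
    rw [mapRange_smul' q (q : ℝ) _ (fun r => by simp)]
    simp

theorem ratComb_injective {x : ℕ → E} (hx : LinearIndependent ℝ x) :
    Function.Injective (ratComb x) :=
  fun _ _ h => mapRange_injective _ Rat.cast_zero Rat.cast_injective (hx h)

end

structure IsConvexWeight (c : ℕ →₀ ℚ) : Prop where
  nonneg : 0 ≤ c
  degree_eq_one : c.degree = 1

theorem IsConvexWeight.support_nonempty {c : ℕ →₀ ℚ} (hc : IsConvexWeight c) :
    c.support.Nonempty := by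
  rw [support_nonempty_iff]
  rintro rfl
  simpa using hc.degree_eq_one

theorem IsConvexWeight.linearCombination {w : ℕ →₀ ℚ} (hw : IsConvexWeight w)
    {c : ℕ → ℕ →₀ ℚ} (hc : ∀ j, IsConvexWeight (c j)) :
    IsConvexWeight (linearCombination ℚ c w) where
  nonneg := by
    rw [linearCombination_apply]
    exact Finset.sum_nonneg fun j _ => smul_nonneg (hw.nonneg j) (hc j).nonneg
  degree_eq_one := by
    rw [linearCombination_apply, map_finsuppSum]
    simp only [map_rat_smul, (hc _).degree_eq_one, smul_eq_mul, mul_one]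
    exact hw.degree_eq_one

theorem support_linearCombination_of_nonneg {w : ℕ →₀ ℚ} (hw : 0 ≤ w) {c : ℕ → ℕ →₀ ℚ}
    (hc : ∀ j, 0 ≤ c j) :
    (linearCombination ℚ c w).support = w.support.biUnion fun j => (c j).support := by
  ext n
  simp only [mem_support_iff, linearCombination_apply, Finset.mem_biUnion, finsetSum_apply,
    Finsupp.sum, Finsupp.smul_apply, smul_eq_mul, ne_eq]
  rw [Finset.sum_eq_zero_iff_of_nonneg fun j _ => mul_nonneg (hw j) (hc j n)]
  simp

structure IsConvexBlockSeq (c : ℕ → ℕ →₀ ℚ) : Prop where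
  weight : ∀ k, IsConvexWeight (c k)
  lt : ∀ ⦃k k'⦄, k < k' → ∀ m ∈ (c k).support, ∀ m' ∈ (c k').support, m < m'

namespace IsConvexBlockSeq

variable {c d : ℕ → ℕ →₀ ℚ}

theorem of_lt_succ (hw : ∀ k, IsConvexWeight (c k))
    (hs : ∀ k, ∀ m ∈ (c k).support, ∀ m' ∈ (c (k + 1)).support, m < m') :
    IsConvexBlockSeq c where
  weight := hw
  lt k k' hk := by
    induction k', hk using Nat.le_induction with
    | base => exact hs k
    | succ n _ ih =>
      intro m hm m' hm'
      obtain ⟨p, hp⟩ := (hw n).support_nonempty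
      exact (ih m hm p hp).trans (hs n p hp m' hm')

theorem eq_of_mem_support (hc : IsConvexBlockSeq c) {k k' n : ℕ} (hk : n ∈ (c k).support)
    (hk' : n ∈ (c k').support) : k = k' := by
  by_contra hne
  rcases Nat.lt_or_gt_of_ne hne with h | h
  · exact lt_irrefl n (hc.lt h n hk n hk')
  · exact lt_irrefl n (hc.lt h n hk' n hk)

theorem injective (hc : IsConvexBlockSeq c) : Function.Injective c := by
  intro k k' h
  obtain ⟨n, hn⟩ := (hc.weight k).support_nonempty
  exact hc.eq_of_mem_support hn (h ▸ hn)

theorem le_of_mem_support (hc : IsConvexBlockSeq c) {k n : ℕ} (hn : n ∈ (c k).support) : k ≤ n := by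
  let p k := (c k).support.min' (hc.weight k).support_nonempty
  have hp : StrictMono p := fun k k' h => hc.lt h _ (Finset.min'_mem _ _) _ (Finset.min'_mem _ _)
  exact (hp.id_le k).trans (Finset.min'_le _ _ hn)

theorem linearCombination (hc : IsConvexBlockSeq c) (hd : IsConvexBlockSeq d) :
    IsConvexBlockSeq fun k => linearCombination ℚ c (d k) where
  weight k := (hd.weight k).linearCombination hc.weight
  lt k k' h m hm m' hm' := by
    simp only [support_linearCombination_of_nonneg (hd.weight _).nonneg
      fun j => (hc.weight j).nonneg, Finset.mem_biUnion] at hm hm'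
    obtain ⟨j, hj, hmj⟩ := hm
    obtain ⟨j', hj', hmj'⟩ := hm'
    exact hc.lt (hd.lt h j hj j' hj') m hmj m' hmj'

end IsConvexBlockSeq

section
variable {E : Type*} [AddCommGroup E] [Module ℝ E]

theorem IsRatConvexBlock.exists_isConvexBlockSeq {x y : ℕ → E} (h : IsRatConvexBlock x y) :
    ∃ c, IsConvexBlockSeq c ∧ y = fun k => ratComb x (c k) := by
  classical
  obtain ⟨I, a, -, hlt, ha, hrat, hsum, hy⟩ := h
  choose q hq using hrat
  let c k : ℕ →₀ ℚ := indicator (I k) fun n _ => q n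
  have hc : ∀ k, ∀ n ∈ I k, c k n = q n := fun k n hn => by simp [c, indicator_apply, hn]
  have hsupp : ∀ k, (c k).support ⊆ I k := fun k => support_indicator_subset _ _
  refine ⟨c, .of_lt_succ (fun k => ⟨fun n => ?_, ?_⟩)
    (fun k m hm m' hm' => hlt k m m' (hsupp k hm) (hsupp _ hm')), funext fun k => ?_⟩
  · simp only [c, indicator_apply]
    split_ifs
    · exact_mod_cast hq n ▸ ha n
    · exact le_rfl
  · rw [degree_apply, Finset.sum_subset (hsupp k) fun n _ hn => notMem_support_iff.1 hn]
    have : ∑ n ∈ I k, (c k n : ℝ) = 1 :=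
      (Finset.sum_congr rfl fun n hn => by rw [hc k n hn, hq n]).trans (hsum k)
    exact_mod_cast this
  · rw [hy k, ratComb_eq_sum_of_subset x (hsupp k)]
    exact Finset.sum_congr rfl fun n hn => by rw [hc k n hn, hq n]

theorem IsConvexBlockSeq.isRatConvexBlock {c : ℕ → ℕ →₀ ℚ} (hc : IsConvexBlockSeq c)
    (x : ℕ → E) : IsRatConvexBlock x fun k => ratComb x (c k) := by
  classical
  let q n : ℚ := if h : ∃ k, n ∈ (c k).support then c (Nat.find h) n else 0
  have hq : ∀ k, ∀ n ∈ (c k).support, q n = c k n := fun k n hn => by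
    have h : ∃ k, n ∈ (c k).support := ⟨k, hn⟩
    simp only [q, dif_pos h, hc.eq_of_mem_support (Nat.find_spec h) hn]
  refine ⟨fun k => (c k).support, fun n => q n, fun k => (hc.weight k).support_nonempty,
    fun k m m' hm hm' => hc.lt k.lt_succ_self m hm m' hm', fun n => ?_, fun n => ⟨q n, rfl⟩,
    fun k => ?_, fun k => ?_⟩
  · simp only [q]
    split_ifs
    · exact_mod_cast (hc.weight _).nonneg n
    · simp
  · rw [Finset.sum_congr rfl fun n hn => congrArg _ (hq k n hn)]
    exact_mod_cast (hc.weight k).degree_eq_one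
  · show ratComb x (c k) = _
    rw [ratComb_eq_sum_of_subset x subset_rfl]
    exact Finset.sum_congr rfl fun n hn => by simp only [hq k n hn]

theorem isRatConvexBlock_iff {x y : ℕ → E} :
    IsRatConvexBlock x y ↔ ∃ c, IsConvexBlockSeq c ∧ y = fun k => ratComb x (c k) :=
  ⟨IsRatConvexBlock.exists_isConvexBlockSeq, fun ⟨_, hc, hy⟩ => hy ▸ hc.isRatConvexBlock x⟩

variable {x y z : ℕ → E}

theorem IsRatConvexBlock.refl (x : ℕ → E) : IsRatConvexBlock x x :=
  ⟨fun k => {k}, fun _ => 1, fun k => Finset.singleton_nonempty k, by simp, fun _ => zero_le_one,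
    fun _ => ⟨1, by simp⟩, by simp, by simp⟩

theorem IsRatConvexBlock.trans (hxy : IsRatConvexBlock x y) (hyz : IsRatConvexBlock y z) :
    IsRatConvexBlock x z := by
  obtain ⟨c, hc, rfl⟩ := isRatConvexBlock_iff.1 hxy
  obtain ⟨d, hd, rfl⟩ := isRatConvexBlock_iff.1 hyz
  exact isRatConvexBlock_iff.2 ⟨_, hc.linearCombination hd,
    funext fun k => (ratComb_linearCombination x c (d k)).symm⟩

theorem IsRatConvexBlock.shift (h : IsRatConvexBlock x y) (n : ℕ) :
    IsRatConvexBlock (fun j => x (j + n)) fun k => y (k + n) := by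
  obtain ⟨c, hc, rfl⟩ := isRatConvexBlock_iff.1 h
  have hbij (k : ℕ) : Set.BijOn (· + n) ((· + n) ⁻¹' (c (k + n)).support) (c (k + n)).support :=
    ⟨fun _ hj => hj, (add_left_injective n).injOn, fun m hm => ⟨m - n, by
      have := hc.le_of_mem_support hm
      simpa [Nat.sub_add_cancel (show n ≤ m by omega)] using hm⟩⟩
  refine isRatConvexBlock_iff.2 ⟨fun k => (c (k + n)).comapDomain (· + n) (hbij k).injOn,
    ⟨fun k => ⟨fun j => (hc.weight _).nonneg (j + n), ?_⟩, ?_⟩, funext fun k => ?_⟩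
  · exact (sum_comapDomain _ _ (fun _ q => q) (hbij k)).trans (hc.weight _).degree_eq_one
  · intro k k' hk j hj j' hj'
    simp only [comapDomain_support, Finset.mem_preimage] at hj hj'
    have := hc.lt (show k + n < k' + n by omega) _ hj _ hj'
    omega
  · simp only [ratComb_apply]
    exact (sum_comapDomain _ _ (fun (m : ℕ) (q : ℚ) => (q : ℝ) • x m) (hbij k)).symm

theorem IsRatConvexBlock.evRatConvexBlock (h : IsRatConvexBlock x y) : EvRatConvexBlock x y :=
  ⟨0, h⟩

theorem EvRatConvexBlock.trans_isRatConvexBlock (hxy : EvRatConvexBlock x y)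
    (hyz : IsRatConvexBlock y z) : EvRatConvexBlock x z :=
  let ⟨n, h⟩ := hxy
  ⟨n, h.trans (hyz.shift n)⟩

end

open Set Cardinal

theorem Set.infinite_of_eventually_mem {α : Type*} {d : ℕ → α} (hd : Function.Injective d)
    {S : Set α} (h : ∀ᶠ k in atTop, d k ∈ S) : S.Infinite :=
  ((Nat.frequently_atTop_iff_infinite.1 h.frequently).image hd.injOn).mono
    (image_preimage_subset d S)

def convexCombinations (c : ℕ → ℕ →₀ ℚ) : Set (ℕ →₀ ℚ) :=
  linearCombination ℚ c '' {w | IsConvexWeight w}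

def weightsAbove (m : ℕ) : Set (ℕ →₀ ℚ) :=
  {c | IsConvexWeight c ∧ ∀ n ∈ c.support, m < n}

theorem IsConvexBlockSeq.eventually_mem_weightsAbove {c : ℕ → ℕ →₀ ℚ} (hc : IsConvexBlockSeq c)
    (m : ℕ) : ∀ᶠ k in atTop, c k ∈ weightsAbove m :=
  eventually_atTop.2 ⟨m + 1, fun k hk => ⟨hc.weight k, fun _ hn => by
    have := hc.le_of_mem_support hn
    omega⟩⟩

theorem exists_isConvexBlockSeq_of_almost_subset {A : Set (ℕ →₀ ℚ)} (hA : A.Infinite)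
    (habove : ∀ m, (A \ weightsAbove m).Finite) :
    ∃ d, IsConvexBlockSeq d ∧ ∀ C, (A \ C).Finite → ∀ᶠ k in atTop, d k ∈ C := by
  have hex (m : ℕ) : ∃ e ∈ A, e ∈ weightsAbove m := by
    obtain ⟨e, he⟩ := (hA.sdiff (habove m)).nonempty
    exact ⟨e, he.1, not_not.1 fun h => he.2 ⟨he.1, h⟩⟩
  choose next hnextA hnext using hex
  let b (k : ℕ) : ℕ := Nat.rec 0 (fun _ m => (next m).support.sup id) k
  have hd : IsConvexBlockSeq (next ∘ b) :=
    .of_lt_succ (fun k => (hnext _).1) fun k m hm m' hm' =>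
      (Finset.le_sup (f := id) hm).trans_lt ((hnext _).2 m' hm')
  refine ⟨next ∘ b, hd, fun C hC => ?_⟩
  rw [← Nat.cofinite_eq_atTop]
  exact eventually_cofinite.2 <| (hC.preimage hd.injective.injOn).subset fun k hk =>
    ⟨hnextA _, hk⟩

section
variable {E : Type*} [AddCommGroup E] [Module ℝ E] {x : ℕ → E}

theorem eventually_mem_convexCombinations (hx : LinearIndependent ℝ x) {c d : ℕ → ℕ →₀ ℚ}
    (h : EvRatConvexBlock (fun j => ratComb x (c j)) fun k => ratComb x (d k)) :
    ∀ᶠ k in atTop, d k ∈ convexCombinations c := by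
  obtain ⟨n, h⟩ := h
  obtain ⟨w, hw, hdw⟩ := isRatConvexBlock_iff.1 h
  refine eventually_atTop.2 ⟨n, fun k hk => ⟨w (k - n), hw.weight _, ratComb_injective hx ?_⟩⟩
  have := congrFun hdw (k - n)
  simp only [Nat.sub_add_cancel hk] at this
  rw [ratComb_linearCombination, this]

theorem evRatConvexBlock_of_eventually_mem {c d : ℕ → ℕ →₀ ℚ} (hc : IsConvexBlockSeq c)
    (hd : IsConvexBlockSeq d) (h : ∀ᶠ k in atTop, d k ∈ convexCombinations c) (x : ℕ → E) :
    EvRatConvexBlock (fun j => ratComb x (c j)) fun k => ratComb x (d k) := by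
  obtain ⟨n, hn⟩ := eventually_atTop.1 h
  choose w hw hdw using fun k => hn (k + n) (Nat.le_add_left n k)
  have hsupp (k : ℕ) : ∀ j ∈ (w k).support, (c j).support ⊆ (d (k + n)).support := fun j hj => by
    rw [← hdw k, support_linearCombination_of_nonneg (hw k).nonneg fun j => (hc.weight j).nonneg]
    exact Finset.subset_biUnion_of_mem (fun j => (c j).support) hj
  refine ⟨n, isRatConvexBlock_iff.2 ⟨w, ⟨hw, fun k k' hk j hj j' hj' => ?_⟩, funext fun k => ?_⟩⟩
  · obtain ⟨m, hm⟩ := (hc.weight j).support_nonempty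
    obtain ⟨m', hm'⟩ := (hc.weight j').support_nonempty
    have hlt := hd.lt (show k + n < k' + n by omega)
    by_contra hjj
    rcases (not_lt.1 hjj).lt_or_eq with h | h
    · exact lt_asymm (hc.lt h m' hm' m hm) (hlt m (hsupp k j hj hm) m' (hsupp k' j' hj' hm'))
    · exact lt_irrefl m (hlt m (hsupp k j hj hm) m (hsupp k' j' hj' (by rwa [h])))
  · show ratComb x (d (k + n)) = _
    rw [← hdw k, ratComb_linearCombination]

end

theorem exists_infinite_almost_subset_of_countable {ι : Type*} [Countable ι] (B : ι → Set ℕ)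
    (hB : ∀ T : Finset ι, (⋂ i ∈ T, B i).Infinite) :
    ∃ A : Set ℕ, A.Infinite ∧ ∀ i, (A \ B i).Finite := by
  classical
  rcases isEmpty_or_nonempty ι with _ | _
  · exact ⟨univ, infinite_univ, isEmptyElim⟩
  obtain ⟨e, he⟩ := exists_surjective_nat ι
  have hgt (n : ℕ) : ∃ a, n < a ∧ ∀ k ≤ n, a ∈ B (e k) := by
    obtain ⟨a, ha, hna⟩ := (hB ((Finset.range (n + 1)).image e)).exists_gt n
    simp only [Finset.mem_image, Finset.mem_range, mem_iInter] at ha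
    exact ⟨a, hna, fun k hk => ha _ ⟨k, by omega, rfl⟩⟩
  choose a hna ha using hgt
  refine ⟨range a, infinite_of_forall_exists_gt fun n => ⟨a n, mem_range_self n, hna n⟩,
    fun i => ?_⟩
  obtain ⟨j, rfl⟩ := he i
  refine ((finite_lt_nat j).image a).subset ?_
  rintro _ ⟨⟨n, rfl⟩, hn⟩
  exact ⟨n, not_le.1 fun h => hn (ha n j h), rfl⟩

theorem aleph0_lt_pseudoIntersectionNumber (h : 0 < pseudoIntersectionNumber) :
    ℵ₀ < pseudoIntersectionNumber := by
  obtain ⟨M, -, hfip, hno, hM⟩ : pseudoIntersectionNumber ∈ _ :=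
    csInf_mem <| nonempty_iff_ne_empty.2 fun he =>
      h.ne' (by rw [pseudoIntersectionNumber, he, Cardinal.sInf_empty])
  rw [← hM, ← not_le, Cardinal.mk_le_aleph0_iff]
  intro
  obtain ⟨A, hA, hAM⟩ := exists_infinite_almost_subset_of_countable (Subtype.val : M → Set ℕ)
    fun T => by simpa using hfip (T.map (Function.Embedding.subtype _)) (by simp)
  exact hno ⟨A, hA, fun B hB => hAM ⟨B, hB⟩⟩

theorem exists_infinite_almost_subset {α ι : Type} [Countable α]
    (hι : #ι < pseudoIntersectionNumber) (B : ι → Set α)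
    (hB : ∀ T : Finset ι, (⋂ i ∈ T, B i).Infinite) :
    ∃ A : Set α, A.Infinite ∧ ∀ i, (A \ B i).Finite := by
  classical
  have : Infinite α := infinite_univ_iff.1 (by simpa using hB ∅)
  let e : α ≃ ℕ := (nonempty_denumerable α).some.eqv
  by_contra hno
  have h𝔭 : pseudoIntersectionNumber ≤ #(range fun i => e '' B i) :=
    csInf_le' ⟨_, ?_, fun F hF => ?_, ?_, rfl⟩
  · exact hι.not_ge (h𝔭.trans mk_range_le)
  · rintro _ ⟨i, rfl⟩
    exact (by simpa using hB {i} : (B i).Infinite).image e.injective.injOn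
  · obtain ⟨T, -, rfl⟩ := Finset.subset_set_image_iff.1 (image_univ (f := fun i => e '' B i) ▸ hF)
    rw [Finset.set_biInter_finset_image]
    exact ((hB T).image e.injective.injOn).mono (image_iInter₂_subset _ _)
  · rintro ⟨A, hA, hAB⟩
    refine hno ⟨e ⁻¹' A, hA.preimage (by simp), fun i => ?_⟩
    simpa [preimage_sdiff, e.preimage_image] using
      (hAB _ ⟨i, rfl⟩).preimage e.injective.injOn

section
variable {E : Type*} [AddCommGroup E] [Module ℝ E]

theorem exists_isRatConvexBlock_forall_evRatConvexBlock {f : ℕ → E} (hf : LinearIndependent ℝ f)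
    {J : Type} (hJ : #J < pseudoIntersectionNumber) (g : J → ℕ → E)
    (hg : ∀ i, IsRatConvexBlock f (g i))
    (hdir : ∀ T : Finset J, ∃ h, IsRatConvexBlock f h ∧ ∀ i ∈ T, EvRatConvexBlock (g i) h) :
    ∃ h, IsRatConvexBlock f h ∧ ∀ i, EvRatConvexBlock (g i) h := by
  choose c hc hgc using fun i => isRatConvexBlock_iff.1 (hg i)
  let B : J ⊕ ℕ → Set (ℕ →₀ ℚ) := Sum.elim (fun i => convexCombinations (c i)) weightsAbove
  have hB (T : Finset (J ⊕ ℕ)) : (⋂ t ∈ T, B t).Infinite := by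
    obtain ⟨h, hfh, hh⟩ := hdir T.toLeft
    obtain ⟨d, hd, rfl⟩ := isRatConvexBlock_iff.1 hfh
    refine infinite_of_eventually_mem hd.injective ?_
    simp only [mem_iInter₂]
    refine (eventually_all_finset T).2 fun t ht => ?_
    cases t with
    | inl i => exact eventually_mem_convexCombinations hf (hgc i ▸ hh i (Finset.mem_toLeft.2 ht))
    | inr m => exact hd.eventually_mem_weightsAbove m
  have hℵ := aleph0_lt_pseudoIntersectionNumber (zero_le.trans_lt hJ)
  have hcard : #(J ⊕ ℕ) < pseudoIntersectionNumber := by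
    rw [mk_sum, lift_id, lift_id, mk_nat]
    exact add_lt_of_lt hℵ.le hJ hℵ
  obtain ⟨A, hA, hAB⟩ := exists_infinite_almost_subset hcard B hB
  obtain ⟨d, hd, hdA⟩ := exists_isConvexBlockSeq_of_almost_subset hA fun m => hAB (.inr m)
  refine ⟨fun k => ratComb f (d k), isRatConvexBlock_iff.2 ⟨d, hd, rfl⟩, fun i => ?_⟩
  rw [hgc i]
  exact evRatConvexBlock_of_eventually_mem (hc i) hd (hdA _ (hAB (.inl i))) f

end

theorem WellFoundedLT.exists_chain {ι X : Type*} [LT ι] [WellFoundedLT ι] [Nonempty X]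
    (P : ι → X → Prop) (R : X → X → Prop)
    (step : ∀ β (F : ι → X), (∀ γ < β, P γ (F γ)) → (∀ γ < β, ∀ δ < γ, R (F δ) (F γ)) →
      ∃ x, P β x ∧ ∀ γ < β, R (F γ) x) :
    ∃ F : ι → X, ∀ β, P β (F β) ∧ ∀ γ < β, R (F γ) (F β) := by
  let F : ι → X := WellFoundedLT.fix fun β F =>
    Classical.epsilon fun x => P β x ∧ ∀ γ (hγ : γ < β), R (F γ hγ) x
  refine ⟨F, fun β => ?_⟩
  induction β using WellFoundedLT.induction with | _ β ih
  rw [show F β = _ from WellFoundedLT.fix_eq _ β]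
  exact Classical.epsilon_spec (step β F (fun γ hγ => (ih γ hγ).1) fun γ hγ => (ih γ hγ).2)

section
variable {E : Type*} [AddCommGroup E] [Module ℝ E]

theorem exists_common_evRatConvexBlock_of_chain {J : Type*} [LinearOrder J] {f : ℕ → E}
    (F : J → ℕ → E) (hF : ∀ j, IsRatConvexBlock f (F j))
    (hchain : ∀ i j, i < j → EvRatConvexBlock (F i) (F j)) (T : Finset J) :
    ∃ h, IsRatConvexBlock f h ∧ ∀ i ∈ T, EvRatConvexBlock (F i) h := by
  rcases T.eq_empty_or_nonempty with rfl | hT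
  · exact ⟨f, .refl f, by simp⟩
  refine ⟨F (T.max' hT), hF _, fun i hi => ?_⟩
  rcases (T.le_max' i hi).lt_or_eq with h | h
  · exact hchain _ _ h
  · exact h ▸ (IsRatConvexBlock.refl _).evRatConvexBlock

theorem exists_isRatConvexBlock_forall_mem {ι : Type} [LinearOrder ι] [WellFoundedLT ι]
    (hι : #ι < pseudoIntersectionNumber) {f : ℕ → E} (hf : LinearIndependent ℝ f)
    (Sa : ι → Set (ℕ → E)) (h1 : ∀ α g h, g ∈ Sa α → EvRatConvexBlock g h → h ∈ Sa α)
    (h2 : ∀ α g, IsRatConvexBlock f g → ∃ x, IsRatConvexBlock g x ∧ x ∈ Sa α) :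
    ∃ g, IsRatConvexBlock f g ∧ ∀ α, g ∈ Sa α := by
  obtain ⟨F, hF⟩ := WellFoundedLT.exists_chain (fun β x => IsRatConvexBlock f x ∧ x ∈ Sa β)
    EvRatConvexBlock fun β G hG hGchain => by
      obtain ⟨h, hfh, hh⟩ := exists_isRatConvexBlock_forall_evRatConvexBlock hf
        ((mk_subtype_le _).trans_lt hι) (fun γ : Iio β => G γ) (fun γ => (hG γ γ.2).1)
        (exists_common_evRatConvexBlock_of_chain _ (fun γ => (hG γ γ.2).1)
          fun γ δ h => hGchain δ δ.2 γ h)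
      obtain ⟨x, hhx, hx⟩ := h2 β h hfh
      exact ⟨x, ⟨hfh.trans hhx, hx⟩, fun γ hγ => (hh ⟨γ, hγ⟩).trans_isRatConvexBlock hhx⟩
  obtain ⟨h, hfh, hh⟩ := exists_isRatConvexBlock_forall_evRatConvexBlock hf hι F
    (fun β => (hF β).1.1) (exists_common_evRatConvexBlock_of_chain F (fun β => (hF β).1.1)
      fun γ β h => (hF β).2 γ h)
  exact ⟨h, hfh, fun α => h1 α _ h (hF α).1.2 (hh α)⟩

end

theorem diagonal_rational_convex_blocks {E : Type*} [AddCommGroup E] [Module ℝ E]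
    {ι : Type} (hκ : Cardinal.mk ι < pseudoIntersectionNumber)
    (S : Set (ℕ → E)) (hS : ∀ f ∈ S, LinearIndependent ℝ f)
    (Sa : ι → Set (ℕ → E)) (hsub : ∀ α, Sa α ⊆ S)
    (h1 : ∀ (α : ι) (g h : ℕ → E), g ∈ Sa α → EvRatConvexBlock g h → h ∈ Sa α)
    (h2 : ∀ (α : ι), ∀ f ∈ S, ∃ g, IsRatConvexBlock f g ∧ g ∈ Sa α) :
    ∀ f ∈ S, ∃ g, IsRatConvexBlock f g ∧ ∀ α, g ∈ Sa α := by
  intro f hf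
  rcases isEmpty_or_nonempty ι with _ | ⟨⟨α₀⟩⟩
  · exact ⟨f, .refl f, isEmptyElim⟩
  -- After passing to `g₀ ∈ Sa α₀`, every block of `g₀` lies in `S`, so `h2` applies to all of them.
  obtain ⟨g₀, hfg₀, hg₀⟩ := h2 α₀ f hf
  have hg₀S : ∀ g, IsRatConvexBlock g₀ g → g ∈ S := fun g hg =>
    hsub α₀ (h1 α₀ g₀ g hg₀ hg.evRatConvexBlock)
  obtain ⟨_, _⟩ := exists_wellFoundedLT ι
  obtain ⟨g, hg₀g, hg⟩ := exists_isRatConvexBlock_forall_mem hκ (hS g₀ (hg₀S g₀ (.refl g₀))) Sa h1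
    fun α g hg => h2 α g (hg₀S g hg)
  exact ⟨g, hfg₀.trans hg₀g, hg⟩
end

section
/- Let X be a Banach space strongly generated by a family 𝒢 of weakly compact subsets. Then a bounded sequence (x_n*) in X* converges to 0 in the Mackey topology μ(X*,X) if and only if it converges to 0 uniformly on every element of 𝒢. -/
open NormedSpace Filter

/-- A family of sets strongly generates X if every weakly compact set is contained in
G + εB_X for some member G of the family. -/
def StronglyGenerates {X : Type*} [NormedAddCommGroup X] [NormedSpace ℝ X]
    (𝒢 : Set (Set X)) : Prop :=
  ∀ L : Set X, IsWeaklyCompact L → ∀ ε : ℝ, 0 < ε →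
    ∃ G ∈ 𝒢, ∀ x ∈ L, ∃ g ∈ G, ‖x - g‖ ≤ ε

/-! A norm-bounded sequence of functionals is equi-Lipschitz, so uniform convergence to `0` on `G`
passes to `G + εB_X` up to an error `Cε`; strong generation puts every weakly compact set inside
such a neighbourhood of a member of `𝒢`. -/

open Metric

theorem mackeyTendsto_zero_iff {X : Type*} [NormedAddCommGroup X] [NormedSpace ℝ X]
    (x : ℕ → StrongDual ℝ X) :
    MackeyTendsto x 0 ↔ ∀ L : Set X, IsWeaklyCompact L →
      TendstoUniformlyOn (fun n p => x n p) (fun _ => 0) atTop L := by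
  simp only [MackeyTendsto, tendstoUniformlyOn_iff, Real.dist_eq, zero_sub, abs_neg, zero_apply,
    sub_zero]

theorem ContinuousLinearMap.tendstoUniformlyOn_zero_of_approx {𝕜 E F : Type*}
    [NontriviallyNormedField 𝕜] [SeminormedAddCommGroup E] [NormedSpace 𝕜 E]
    [SeminormedAddCommGroup F] [NormedSpace 𝕜 F] {x : ℕ → E →L[𝕜] F} {C : ℝ}
    (hb : ∀ n, ‖x n‖ ≤ C) {L : Set E}
    (happrox : ∀ δ > 0, ∃ G : Set E, (∀ p ∈ L, ∃ g ∈ G, ‖p - g‖ ≤ δ) ∧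
      TendstoUniformlyOn (fun n p => x n p) (fun _ => 0) atTop G) :
    TendstoUniformlyOn (fun n p => x n p) (fun _ => 0) atTop L := by
  rw [tendstoUniformlyOn_iff]
  intro ε hε
  have hC : 0 ≤ C := (norm_nonneg _).trans (hb 0)
  set δ := ε / (2 * (C + 1))
  have hCδ : C * δ ≤ ε / 2 := by
    rw [mul_div_assoc', div_le_div_iff₀ (by positivity) two_pos]
    nlinarith
  obtain ⟨G, hLG, hG⟩ := happrox δ (by positivity)
  filter_upwards [tendstoUniformlyOn_iff.mp hG (ε / 2) (half_pos hε)] with n hn p hp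
  obtain ⟨g, hg, hpg⟩ := hLG p hp
  simp only [dist_zero_left] at hn ⊢
  calc ‖x n p‖ = ‖x n g + x n (p - g)‖ := by rw [map_sub, add_sub_cancel]
    _ ≤ ‖x n g‖ + ‖x n‖ * ‖p - g‖ := norm_add_le_of_le le_rfl ((x n).le_opNorm _)
    _ < ε / 2 + C * δ :=
      add_lt_add_of_lt_of_le (hn g hg) (mul_le_mul (hb n) hpg (norm_nonneg _) hC)
    _ ≤ ε := by linarith

theorem mackeyNull_iff_uniform_on_generating_family_general (X : Type*) [NormedAddCommGroup X]
    [NormedSpace ℝ X] (𝒢 : Set (Set X))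
    (h𝒢 : ∀ G ∈ 𝒢, IsWeaklyCompact G) (hgen : StronglyGenerates 𝒢)
    (x : ℕ → StrongDual ℝ X) (C : ℝ) (hb : ∀ n, ‖x n‖ ≤ C) :
    MackeyTendsto x 0 ↔
      ∀ G ∈ 𝒢, TendstoUniformlyOn (fun n p => x n p) (fun _ => 0) atTop G := by
  rw [mackeyTendsto_zero_iff]
  refine ⟨fun hM G hG => hM G (h𝒢 G hG), fun hU L hL => ?_⟩
  refine ContinuousLinearMap.tendstoUniformlyOn_zero_of_approx hb fun δ hδ => ?_
  obtain ⟨G, hG, hLG⟩ := hgen L hL δ hδ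
  exact ⟨G, hLG, hU G hG⟩

theorem mackeyNull_iff_uniform_on_generating_family (X : Type*) [NormedAddCommGroup X]
    [NormedSpace ℝ X] [CompleteSpace X] (𝒢 : Set (Set X))
    (h𝒢 : ∀ G ∈ 𝒢, IsWeaklyCompact G) (hgen : StronglyGenerates 𝒢)
    (x : ℕ → StrongDual ℝ X) (C : ℝ) (hb : ∀ n, ‖x n‖ ≤ C) :
    MackeyTendsto x 0 ↔
      ∀ G ∈ 𝒢, TendstoUniformlyOn (fun n p => x n p) (fun _ => 0) atTop G :=
  mackeyNull_iff_uniform_on_generating_family_general X 𝒢 h𝒢 hgen x C hb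
end
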